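/- arXiv:2306.09748 — 4 statements merged into one kernel-verified Lean document; each statement's English description precedes it below -/
import Mathlib

section
/- Let n ≥ 3 be an integer and define φ(r,s) = s^{2−n}/(2n(n−2)) − r² s^{−n}/(2n(n+2)) for (r,s) ∈ D. Then: (i) φ(r,s) > 0 for all (r,s) ∈ D; (ii) for all (r,s) ∈ D with s > 0, ∂²/∂r∂s ln φ(r,s) = 4 r s (n²−4)/((n+2)s² − (n−2)r²)² ≥ 0; (iii) S(r) := (r ∂₁φ(r,r) φ(0,r) − r φ(r,r) ∂₂φ(0,r))/φ(0,r)² = 2(n−2)/(n+2) for all r > 0; and (iv) Q(r) := 1/(r φ(0,r)) = 2n(n−2) r^{n−3} for all r > 0. -/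
open Set

private lemma phi_eq' (n : ℕ) (hn : 3 ≤ n) (s : ℝ) (hs : s ≠ 0) (r : ℝ) :
    s ^ ((2:ℤ) - (n:ℤ)) / (2 * (n:ℝ) * ((n:ℝ) - 2)) -
      r ^ 2 * s ^ (-(n:ℤ)) / (2 * (n:ℝ) * ((n:ℝ) + 2)) =
    ((((n:ℝ) + 2) * s ^ 2 - ((n:ℝ) - 2) * r ^ 2) * s ^ (-(n:ℤ))) /
      (2 * (n:ℝ) * ((n:ℝ) - 2) * ((n:ℝ) + 2)) := by
  have hN3 : (3:ℝ) ≤ (n:ℝ) := by exact_mod_cast hn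
  have h2 : s ^ ((2:ℤ) - (n:ℤ)) = s ^ 2 * s ^ (-(n:ℤ)) := by
    rw [← zpow_natCast s 2, ← zpow_add₀ hs]
    ring_nf
  rw [h2]
  have hn0 : (n:ℝ) ≠ 0 := by linarith
  have hn2 : (n:ℝ) - 2 ≠ 0 := by linarith
  have hn2' : (n:ℝ) + 2 ≠ 0 := by linarith
  field_simp

private lemma phi_pos' (n : ℕ) (hn : 3 ≤ n) (r s : ℝ) (hr : 0 ≤ r) (hrs : r ≤ s) (hs : 0 < s) :
    0 < s ^ ((2:ℤ) - (n:ℤ)) / (2 * (n:ℝ) * ((n:ℝ) - 2)) -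
      r ^ 2 * s ^ (-(n:ℤ)) / (2 * (n:ℝ) * ((n:ℝ) + 2)) := by
  have hN3 : (3:ℝ) ≤ (n:ℝ) := by exact_mod_cast hn
  rw [phi_eq' n hn s hs.ne' r]
  have hA : 0 < ((n:ℝ) + 2) * s ^ 2 - ((n:ℝ) - 2) * r ^ 2 := by
    nlinarith [mul_self_le_mul_self hr hrs, sq_nonneg s]
  have ht : 0 < s ^ (-(n:ℤ)) := zpow_pos hs _
  have hK : 0 < 2 * (n:ℝ) * ((n:ℝ) - 2) * ((n:ℝ) + 2) := by
    have h1 : (0:ℝ) < (n:ℝ) - 2 := by linarith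
    have h2 : (0:ℝ) < (n:ℝ) + 2 := by linarith
    have h3 : (0:ℝ) < (n:ℝ) := by linarith
    positivity
  positivity

private lemma hD_y' (n : ℕ) (x s : ℝ) (hs : s ≠ 0) :
    HasDerivAt (fun y : ℝ => y ^ ((2:ℤ) - (n:ℤ)) / (2 * (n:ℝ) * ((n:ℝ) - 2)) -
        x ^ 2 * y ^ (-(n:ℤ)) / (2 * (n:ℝ) * ((n:ℝ) + 2)))
      (((2:ℝ) - (n:ℝ)) * s ^ ((2:ℤ) - (n:ℤ) - 1) / (2 * (n:ℝ) * ((n:ℝ) - 2)) -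
        x ^ 2 * (-(n:ℝ) * s ^ (-(n:ℤ) - 1)) / (2 * (n:ℝ) * ((n:ℝ) + 2))) s := by
  have h1 := (hasDerivAt_zpow ((2:ℤ) - (n:ℤ)) s (Or.inl hs)).div_const (2 * (n:ℝ) * ((n:ℝ) - 2))
  have h2 := ((hasDerivAt_zpow (-(n:ℤ)) s (Or.inl hs)).const_mul (x ^ 2)).div_const
      (2 * (n:ℝ) * ((n:ℝ) + 2))
  have := h1.sub h2
  exact this.congr_deriv (by push_cast; ring)

private lemma hD_x' (a b c r : ℝ) :
    HasDerivAt (fun x : ℝ => a - x ^ 2 * b / c) (-(2 * r * b / c)) r := by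
  have h2 : HasDerivAt (fun x : ℝ => x ^ 2 * b / c) (2 * r * b / c) r := by
    have := ((hasDerivAt_pow 2 r).mul_const b).div_const c
    refine this.congr_deriv ?_
    push_cast; ring
  simpa using h2.const_sub a

/-- verification of the blowup-criterion hypotheses for the Green kernel
`φ(r,s) = s^{2−n}/(2n(n−2)) − r²s^{−n}/(2n(n+2))` of the homogeneous `Ḣ²` inertia
operator on `ℝⁿ`, `n ≥ 3`: positivity on `D`, the explicit value of the mixed partial of
`log φ`, `S(r) = 2(n−2)/(n+2)`, and `Q(r) = 1/(rφ(0,r)) = 2n(n−2)r^{n−3}`. -/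
theorem H2dot_kernel_properties (n : ℕ) (hn : 3 ≤ n)
    (φ : ℝ → ℝ → ℝ)
    (hφ : ∀ r s : ℝ, φ r s =
      s ^ ((2:ℤ) - (n:ℤ)) / (2 * (n:ℝ) * ((n:ℝ) - 2)) -
        r ^ 2 * s ^ (-(n:ℤ)) / (2 * (n:ℝ) * ((n:ℝ) + 2))) :
    (∀ r s : ℝ, 0 ≤ r → r ≤ s → (r, s) ≠ ((0:ℝ), (0:ℝ)) → 0 < φ r s) ∧
    (∀ r s : ℝ, 0 ≤ r → r ≤ s → 0 < s →
      deriv (fun x => deriv (fun y => Real.log (φ x y)) s) r =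
        4 * r * s * ((n:ℝ) ^ 2 - 4) / (((n:ℝ) + 2) * s ^ 2 - ((n:ℝ) - 2) * r ^ 2) ^ 2 ∧
      0 ≤ deriv (fun x => deriv (fun y => Real.log (φ x y)) s) r) ∧
    (∀ r : ℝ, 0 < r →
      (r * deriv (fun x => φ x r) r * φ 0 r - r * φ r r * deriv (fun y => φ 0 y) r) /
          (φ 0 r) ^ 2 = 2 * ((n:ℝ) - 2) / ((n:ℝ) + 2)) ∧
    (∀ r : ℝ, 0 < r → 1 / (r * φ 0 r) = 2 * (n:ℝ) * ((n:ℝ) - 2) * r ^ (n - 3)) := by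
  have hφfun : φ = fun x y => y ^ ((2:ℤ) - (n:ℤ)) / (2 * (n:ℝ) * ((n:ℝ) - 2)) -
      x ^ 2 * y ^ (-(n:ℤ)) / (2 * (n:ℝ) * ((n:ℝ) + 2)) := by
    funext x y; exact hφ x y
  subst hφfun
  have hN3 : (3:ℝ) ≤ (n:ℝ) := by exact_mod_cast hn
  have hn0 : (n:ℝ) ≠ 0 := by linarith
  have hn2 : (n:ℝ) - 2 ≠ 0 := by linarith
  have hn2' : (n:ℝ) + 2 ≠ 0 := by linarith
  refine ⟨?_, ?_, ?_, ?_⟩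
  · -- (i) positivity
    intro r s hr hrs hne
    have hs : 0 < s := by
      rcases lt_or_eq_of_le (hr.trans hrs) with h | h
      · exact h
      · exfalso; apply hne
        have hs0 : s = 0 := h.symm
        have hr0 : r = 0 := le_antisymm (hs0 ▸ hrs) hr
        simp [hr0, hs0]
    exact phi_pos' n hn r s hr hrs hs
  · -- (ii) mixed partial of log
    intro r s hr hrs hs
    set N := (n:ℝ) with hN
    set c1 := 2 * N * (N - 2) with hc1
    set c2 := 2 * N * (N + 2) with hc2
    set D2 : ℝ → ℝ := fun x => ((2:ℝ) - N) * s ^ ((2:ℤ) - (n:ℤ) - 1) / c1 -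
        x ^ 2 * (-N * s ^ (-(n:ℤ) - 1)) / c2 with hD2def
    set ψs : ℝ → ℝ := fun x => s ^ ((2:ℤ) - (n:ℤ)) / c1 - x ^ 2 * s ^ (-(n:ℤ)) / c2 with hψdef
    have hψpos : ∀ x : ℝ, |x| ≤ s → 0 < ψs x := by
      intro x hx
      have h1 : 0 < ψs |x| := phi_pos' n hn |x| s (abs_nonneg x) hx hs
      simpa [hψdef, sq_abs] using h1
    have hFg : ∀ x : ℝ, 0 < ψs x →
        deriv (fun y => Real.log (y ^ ((2:ℤ) - (n:ℤ)) / c1 - x ^ 2 * y ^ (-(n:ℤ)) / c2)) s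
          = D2 x / ψs x := by
      intro x hx
      exact ((hD_y' n x s hs.ne').log hx.ne').deriv
    have hcont : Continuous ψs := by
      apply Continuous.sub continuous_const
      exact ((continuous_pow 2).mul continuous_const).div_const c2
    have hopen : IsOpen {x : ℝ | 0 < ψs x} := isOpen_lt continuous_const hcont
    have hrmem : r ∈ {x : ℝ | 0 < ψs x} := by
      have := hψpos r (by rwa [abs_of_nonneg hr])
      simpa using this
    have hev : (fun x => deriv (fun y => Real.log
          (y ^ ((2:ℤ) - (n:ℤ)) / c1 - x ^ 2 * y ^ (-(n:ℤ)) / c2)) s)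
        =ᶠ[nhds r] (fun x => D2 x / ψs x) := by
      filter_upwards [hopen.mem_nhds hrmem] with x hx using hFg x hx
    have hderiv_eq := hev.deriv_eq
    have hpos : 0 < ψs r := hrmem
    -- derivative of numerator and denominator
    have hnum : HasDerivAt D2 (-(2 * r * (-N * s ^ (-(n:ℤ) - 1)) / c2)) r :=
      hD_x' _ _ _ r
    have hden : HasDerivAt ψs (-(2 * r * s ^ (-(n:ℤ)) / c2)) r := hD_x' _ _ _ r
    have hg : HasDerivAt (fun x => D2 x / ψs x)
        ((-(2 * r * (-N * s ^ (-(n:ℤ) - 1)) / c2) * ψs r -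
          D2 r * -(2 * r * s ^ (-(n:ℤ)) / c2)) / (ψs r) ^ 2) r :=
      hnum.div hden hpos.ne'
    have hval : deriv (fun x => deriv (fun y => Real.log
          (y ^ ((2:ℤ) - (n:ℤ)) / c1 - x ^ 2 * y ^ (-(n:ℤ)) / c2)) s) r =
        4 * r * s * (N ^ 2 - 4) / ((N + 2) * s ^ 2 - (N - 2) * r ^ 2) ^ 2 := by
      rw [hderiv_eq, hg.deriv]
      have hA : 0 < (N + 2) * s ^ 2 - (N - 2) * r ^ 2 := by
        nlinarith [mul_self_le_mul_self hr hrs, sq_nonneg s]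
      have ht : (0:ℝ) < s ^ (-(n:ℤ)) := zpow_pos hs _
      have hψval : ψs r = (((N + 2) * s ^ 2 - (N - 2) * r ^ 2) * s ^ (-(n:ℤ))) /
          (2 * N * (N - 2) * (N + 2)) := phi_eq' n hn s hs.ne' r
      have e2 : s ^ ((2:ℤ) - (n:ℤ) - 1) = s * s ^ (-(n:ℤ)) := by
        rw [show (2:ℤ) - (n:ℤ) - 1 = 1 + -(n:ℤ) by ring, zpow_add₀ hs.ne', zpow_one]
      have e3 : s ^ (-(n:ℤ) - 1) = s ^ (-(n:ℤ)) / s := by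
        rw [zpow_sub_one₀ hs.ne', div_eq_mul_inv]
      have hD2r : D2 r = ((2:ℝ) - N) * (s * s ^ (-(n:ℤ))) / c1 -
          r ^ 2 * (-N * (s ^ (-(n:ℤ)) / s)) / c2 := by
        rw [hD2def]; rw [e2, e3]
      rw [hψval, hD2r, e3, hc1, hc2]
      field_simp
      ring
    refine ⟨hval, ?_⟩
    rw [hval]
    apply div_nonneg _ (sq_nonneg _)
    have : (0:ℝ) ≤ N ^ 2 - 4 := by nlinarith
    have h4 : (0:ℝ) ≤ 4 * r * s := by positivity
    nlinarith
  · -- (iii) S(r)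
    intro r hr
    have hd1 : deriv (fun x : ℝ => r ^ ((2:ℤ) - (n:ℤ)) / (2 * (n:ℝ) * ((n:ℝ) - 2)) -
        x ^ 2 * r ^ (-(n:ℤ)) / (2 * (n:ℝ) * ((n:ℝ) + 2))) r =
        -(2 * r * r ^ (-(n:ℤ)) / (2 * (n:ℝ) * ((n:ℝ) + 2))) := (hD_x' _ _ _ r).deriv
    have hd2 : deriv (fun y : ℝ => y ^ ((2:ℤ) - (n:ℤ)) / (2 * (n:ℝ) * ((n:ℝ) - 2)) -
        (0:ℝ) ^ 2 * y ^ (-(n:ℤ)) / (2 * (n:ℝ) * ((n:ℝ) + 2))) r =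
        ((2:ℝ) - (n:ℝ)) * r ^ ((2:ℤ) - (n:ℤ) - 1) / (2 * (n:ℝ) * ((n:ℝ) - 2)) -
        (0:ℝ) ^ 2 * (-(n:ℝ) * r ^ (-(n:ℤ) - 1)) / (2 * (n:ℝ) * ((n:ℝ) + 2)) :=
      (hD_y' n 0 r hr.ne').deriv
    have hpos0 : 0 < r ^ ((2:ℤ) - (n:ℤ)) / (2 * (n:ℝ) * ((n:ℝ) - 2)) -
        (0:ℝ) ^ 2 * r ^ (-(n:ℤ)) / (2 * (n:ℝ) * ((n:ℝ) + 2)) :=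
      phi_pos' n hn 0 r le_rfl hr.le hr
    have e1 : r ^ ((2:ℤ) - (n:ℤ)) = r ^ 2 * r ^ (-(n:ℤ)) := by
      rw [← zpow_natCast r 2, ← zpow_add₀ hr.ne']
      ring_nf
    have e2 : r ^ ((2:ℤ) - (n:ℤ) - 1) = r * r ^ (-(n:ℤ)) := by
      rw [show (2:ℤ) - (n:ℤ) - 1 = 1 + -(n:ℤ) by ring, zpow_add₀ hr.ne', zpow_one]
    rw [e1] at hpos0
    beta_reduce
    rw [hd1, hd2, e1, e2]
    have ht : (0:ℝ) < r ^ (-(n:ℤ)) := zpow_pos hr _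
    have hne : r ^ 2 * r ^ (-(n:ℤ)) / (2 * (n:ℝ) * ((n:ℝ) - 2)) -
        (0:ℝ) ^ 2 * r ^ (-(n:ℤ)) / (2 * (n:ℝ) * ((n:ℝ) + 2)) ≠ 0 := hpos0.ne'
    field_simp
    ring
  · -- (iv) Q(r)
    intro r hr
    have e1 : r ^ ((2:ℤ) - (n:ℤ)) = r ^ 2 * r ^ (-(n:ℤ)) := by
      rw [← zpow_natCast r 2, ← zpow_add₀ hr.ne']
      ring_nf
    have hm3 : r ^ ((n:ℤ) - 3) = r ^ (n - 3) := by
      rw [show (n:ℤ) - 3 = ((n - 3 : ℕ) : ℤ) by omega, zpow_natCast]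
    have ht : (0:ℝ) < r ^ (-(n:ℤ)) := zpow_pos hr _
    have htm : r ^ (-(n:ℤ)) = 1 / r ^ (n:ℤ) := by
      rw [zpow_neg, one_div]
    have hrn : (0:ℝ) < r ^ (n:ℤ) := zpow_pos hr _
    have key : r ^ 3 * r ^ (-(n:ℤ)) = r ^ ((3:ℤ) - (n:ℤ)) := by
      rw [← zpow_natCast r 3, ← zpow_add₀ hr.ne']
      ring_nf
    have key2 : r ^ ((3:ℤ) - (n:ℤ)) * r ^ ((n:ℤ) - 3) = 1 := by
      rw [← zpow_add₀ hr.ne']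
      norm_num
    beta_reduce
    rw [e1, ← hm3]
    have hnum : r * (r ^ 2 * r ^ (-(n:ℤ)) / (2 * (n:ℝ) * ((n:ℝ) - 2)) -
        (0:ℝ) ^ 2 * r ^ (-(n:ℤ)) / (2 * (n:ℝ) * ((n:ℝ) + 2))) =
        r ^ ((3:ℤ) - (n:ℤ)) / (2 * (n:ℝ) * ((n:ℝ) - 2)) := by
      rw [← key]; ring
    rw [hnum]
    rw [one_div_div]
    rw [div_eq_iff (by positivity : r ^ ((3:ℤ) - (n:ℤ)) ≠ 0)]
    have key2' : r ^ ((n:ℤ) - 3) * r ^ ((3:ℤ) - (n:ℤ)) = 1 := by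
      rw [← zpow_add₀ hr.ne']; norm_num
    linear_combination (-2 * (n:ℝ) * ((n:ℝ) - 2)) * key2'
end

section
/- Let n > 0 be a real number. Suppose α : [0,∞) → ℝ is continuous, differentiable on (0,∞), satisfies α(0) = 1, and satisfies the Riccati equation r α'(r) = n (r²/n² + α(r) − α(r)²) for all r > 0. Then for all r > 0: 1 ≤ α(r) ≤ 1/2 + √(1/4 + r²/n²) and α'(r) ≥ 0. -/
/-! Both bounds are barrier arguments that only use the sign of the right-hand side
`r²/n² + α − α²`, which is positive for `0 < α < 1`, nonnegative for `1 ≤ α ≤ β(r)` and negative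
for `α > β(r)`, where `β(r) = 1/2 + √(1/4 + r²/n²)` is the larger root. After the last point
where `α` lies on the good side of a nondecreasing barrier, `α` cannot move further away from it.
The barriers `1` and `β` both start at `α(0) = 1`, so the singularity of the equation at `r = 0`
is never used. -/

open Set Filter Topology

section Barrier

variable {f g : ℝ → ℝ} {a b : ℝ}

theorem exists_last_le_of_continuousOn (hab : a ≤ b) (hf : ContinuousOn f (Icc a b))
    (hg : ContinuousOn g (Icc a b)) (ha : f a ≤ g a) (hb : g b < f b) :
    ∃ s ∈ Ico a b, f s ≤ g s ∧ ∀ x ∈ Ioc s b, g x < f x := by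
  set S := {x ∈ Icc a b | f x ≤ g x}
  have hSbdd : BddAbove S := ⟨b, fun x hx => hx.1.2⟩
  have hs : sSup S ∈ S := (isClosed_Icc.isClosed_le hf hg).csSup_mem ⟨a, ⟨le_rfl, hab⟩, ha⟩ hSbdd
  refine ⟨sSup S, ⟨hs.1.1, hs.1.2.lt_of_ne ?_⟩, hs.2, fun x hx => ?_⟩
  · rintro hsb
    exact hb.not_ge (hsb ▸ hs.2)
  · by_contra! hle
    exact hx.1.not_ge (le_csSup hSbdd ⟨⟨hs.1.1.trans hx.1.le, hx.2⟩, hle⟩)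

/-- The band of width `ε` lets the slope condition rely on information that is only available
close to the barrier, such as the positivity of `α` near `α = 1`. -/
theorem image_le_of_deriv_nonpos_above_boundary {ε : ℝ} (hab : a ≤ b) (hε : 0 < ε)
    (hf : ContinuousOn f (Icc a b)) (hf' : DifferentiableOn ℝ f (Ioo a b))
    (hg : ContinuousOn g (Icc a b)) (hg_mono : MonotoneOn g (Icc a b)) (ha : f a ≤ g a)
    (hslope : ∀ x ∈ Ioo a b, g x < f x → f x < g x + ε → deriv f x ≤ 0) : f b ≤ g b := by
  by_contra! hb
  obtain ⟨s, ⟨has, hsb⟩, hfgs, habove⟩ := exists_last_le_of_continuousOn hab hf hg ha hb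
  have hnear : ∀ᶠ x in 𝓝[>] s, f x < g x + ε := by
    have hcont : ContinuousWithinAt (fun x => f x - g x) (Ioc s b) s :=
      ((hf.sub hg) s ⟨has, hsb.le⟩).mono fun x hx => ⟨has.trans hx.1.le, hx.2⟩
    rw [ContinuousWithinAt, nhdsWithin_Ioc_eq_nhdsGT hsb] at hcont
    filter_upwards [hcont.eventually (gt_mem_nhds (by linarith : f s - g s < ε))] with x hx
    linarith
  obtain ⟨u, hsu, hIoo⟩ := mem_nhdsGT_iff_exists_Ioo_subset.mp hnear
  set t := min u b
  have hst : s < t := lt_min hsu hsb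
  have htb : t ≤ b := min_le_right u b
  have hanti : AntitoneOn f (Icc s t) := by
    have hint : interior (Icc s t) ⊆ Ioo a b := by
      rw [interior_Icc]
      exact Ioo_subset_Ioo has htb
    refine antitoneOn_of_deriv_nonpos (convex_Icc s t) (hf.mono (Icc_subset_Icc has htb))
      (hf'.mono hint) fun x hx => hslope x (hint hx) ?_ ?_
    all_goals rw [interior_Icc] at hx
    · exact habove x ⟨hx.1, hx.2.le.trans htb⟩
    · exact hIoo ⟨hx.1, hx.2.trans_le (min_le_left u b)⟩
  have hft : f t ≤ f s := hanti ⟨le_rfl, hst.le⟩ ⟨hst.le, le_rfl⟩ hst.le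
  have hgst : g s ≤ g t := hg_mono ⟨has, hsb.le⟩ ⟨has.trans hst.le, htb⟩ hst.le
  linarith [habove t ⟨hst, htb⟩]

end Barrier

section Quadratic

variable {a c : ℝ}

theorem add_sub_sq_nonneg_of_le (hc : 0 ≤ 1 / 4 + c) (ha : 1 / 2 ≤ a)
    (ha' : a ≤ 1 / 2 + √(1 / 4 + c)) : 0 ≤ c + a - a ^ 2 := by
  have h := (Real.le_sqrt (by linarith) hc).mp (by linarith : a - 1 / 2 ≤ √(1 / 4 + c))
  nlinarith

theorem add_sub_sq_neg_of_lt (ha : 1 / 2 + √(1 / 4 + c) < a) : c + a - a ^ 2 < 0 := by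
  have h := (Real.sqrt_lt' (by linarith [Real.sqrt_nonneg (1 / 4 + c)])).mp
    (by linarith : √(1 / 4 + c) < a - 1 / 2)
  nlinarith

end Quadratic

noncomputable def riccatiBarrier (n r : ℝ) : ℝ := 1 / 2 + √(1 / 4 + r ^ 2 / n ^ 2)

theorem riccatiBarrier_zero (n : ℝ) : riccatiBarrier n 0 = 1 := by
  rw [riccatiBarrier, show (1 / 4 : ℝ) + 0 ^ 2 / n ^ 2 = (1 / 2) ^ 2 by ring,
    Real.sqrt_sq (by norm_num)]
  norm_num

theorem continuous_riccatiBarrier (n : ℝ) : Continuous (riccatiBarrier n) := by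
  unfold riccatiBarrier
  fun_prop

theorem monotoneOn_riccatiBarrier (n : ℝ) : MonotoneOn (riccatiBarrier n) (Ici 0) := by
  intro x hx y _ hxy
  unfold riccatiBarrier
  gcongr

/-- Riccati estimate for the Bessel ratio `𝒜(r) = α_{n−2}(r)/α_n(r)`:
a continuous solution on `[0,∞)` of `rα' = n(r²/n² + α − α²)` with `α(0) = 1` satisfies
`1 ≤ α(r) ≤ 1/2 + √(1/4 + r²/n²)` and `α' ≥ 0` on `(0,∞)`. -/
theorem riccati_alpha (n : ℝ) (hn : 0 < n) (α : ℝ → ℝ)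
    (hcont : ContinuousOn α (Ici 0))
    (hdiff : ∀ r : ℝ, 0 < r → DifferentiableAt ℝ α r)
    (h0 : α 0 = 1)
    (hriccati : ∀ r : ℝ, 0 < r →
      r * deriv α r = n * (r ^ 2 / n ^ 2 + α r - α r ^ 2)) :
    ∀ r : ℝ, 0 < r →
      1 ≤ α r ∧ α r ≤ 1 / 2 + Real.sqrt (1 / 4 + r ^ 2 / n ^ 2) ∧ 0 ≤ deriv α r := by
  intro r hr
  have hsign : ∀ x, 0 < x → (0 ≤ deriv α x ↔ 0 ≤ x ^ 2 / n ^ 2 + α x - α x ^ 2) := fun x hx => by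
    rw [← mul_nonneg_iff_of_pos_left hx, hriccati x hx, mul_nonneg_iff_of_pos_left hn]
  have hαcont : ContinuousOn α (Icc 0 r) := hcont.mono Icc_subset_Ici_self
  have hαdiff : DifferentiableOn ℝ α (Ioo 0 r) := fun x hx =>
    (hdiff x hx.1).differentiableWithinAt
  have hlow : 1 ≤ α r := by
    have h := image_le_of_deriv_nonpos_above_boundary (g := fun _ => -1) hr.le one_pos hαcont.neg
      hαdiff.neg continuousOn_const monotoneOn_const (by simp [h0]) fun x hx hx₁ hx₂ => by
        simp only [Pi.neg_apply, deriv.neg, neg_nonpos] at hx₁ hx₂ ⊢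
        have hx₀ : 0 ≤ x ^ 2 / n ^ 2 := by positivity
        rw [hsign x hx.1]
        nlinarith
    simp only [Pi.neg_apply] at h
    linarith
  have hup : α r ≤ riccatiBarrier n r :=
    image_le_of_deriv_nonpos_above_boundary hr.le one_pos hαcont hαdiff
      (continuous_riccatiBarrier n).continuousOn
      ((monotoneOn_riccatiBarrier n).mono Icc_subset_Ici_self) (by rw [h0, riccatiBarrier_zero])
      fun x hx hβ _ => le_of_not_gt fun hpos =>
        (add_sub_sq_neg_of_lt hβ).not_ge ((hsign x hx.1).mp hpos.le)
  refine ⟨hlow, hup, (hsign r hr).mpr (add_sub_sq_nonneg_of_le (by positivity) ?_ hup)⟩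
  linarith
end

section
/- Let n > 0 be a real number. Suppose β : [0,∞) → ℝ is continuous, differentiable on (0,∞), satisfies β(0) = 0, β(r) ≥ 0 for all r ≥ 0, and satisfies the Riccati equation r β'(r) = n (−r²/n² + β(r) + β(r)²) for all r > 0. Then for all r > 0: β(r) ≥ √(1/4 + r²/n²) − 1/2 and β'(r) ≥ 0. -/
open Set

set_option maxHeartbeats 1000000

/-- Riccati estimate for the Bessel ratio `ℬ(r) = β_{n−2}(r)/(n²β_n(r))`:
a continuous nonnegative solution on `[0,∞)` of `rβ' = n(−r²/n² + β + β²)` with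
`β(0) = 0` satisfies `β(r) ≥ √(1/4 + r²/n²) − 1/2` and `β' ≥ 0` on `(0,∞)`. -/
theorem riccati_beta (n : ℝ) (hn : 0 < n) (β : ℝ → ℝ)
    (hcont : ContinuousOn β (Ici 0))
    (hdiff : ∀ r : ℝ, 0 < r → DifferentiableAt ℝ β r)
    (h0 : β 0 = 0)
    (hnonneg : ∀ r : ℝ, 0 ≤ r → 0 ≤ β r)
    (hriccati : ∀ r : ℝ, 0 < r →
      r * deriv β r = n * (-(r ^ 2) / n ^ 2 + β r + β r ^ 2)) :
    ∀ r : ℝ, 0 < r →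
      Real.sqrt (1 / 4 + r ^ 2 / n ^ 2) - 1 / 2 ≤ β r ∧ 0 ≤ deriv β r := by
  have hn2 : (0:ℝ) < n ^ 2 := by positivity
  -- polynomial form of the Riccati equation
  have hric' : ∀ x : ℝ, 0 < x →
      x * deriv β x * n ^ 2 = n * (-(x ^ 2) + (β x + β x ^ 2) * n ^ 2) := by
    intro x hx
    rw [hriccati x hx]
    field_simp
    ring
  -- Key claim: β r + β r ^ 2 ≥ r² / n² for all r > 0.
  have key : ∀ r : ℝ, 0 < r → r ^ 2 / n ^ 2 ≤ β r + β r ^ 2 := by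
    intro r₀ hr₀
    by_contra hF
    push_neg at hF
    set c := β r₀ with hc
    have hc0 : 0 ≤ c := hnonneg r₀ hr₀.le
    have hF2 : (c + c ^ 2) * n ^ 2 < r₀ ^ 2 := (lt_div_iff₀ hn2).mp hF
    -- Step 1: β stays ≤ c on [r₀, ∞).
    have step1 : ∀ x : ℝ, r₀ ≤ x → β x ≤ c := by
      intro b hb
      have main := image_le_of_deriv_right_lt_deriv_boundary
        (f := β) (f' := deriv β) (a := r₀) (b := b)
        (B := fun _ => c) (B' := fun _ => 0)
        (hcont.mono (fun x hx => le_trans hr₀.le hx.1))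
        (fun x hx => ((hdiff x (lt_of_lt_of_le hr₀ hx.1)).hasDerivAt).hasDerivWithinAt)
        (le_refl c) (fun x => hasDerivAt_const x c)
        ?_
      · exact main ⟨hb, le_refl b⟩
      · intro x hx hxc
        have hx0 : 0 < x := lt_of_lt_of_le hr₀ hx.1
        have hxr : r₀ ^ 2 ≤ x ^ 2 := by nlinarith [hx.1]
        have e2 := hric' x hx0
        rw [hxc] at e2
        by_contra hge
        push_neg at hge
        nlinarith [mul_nonneg (mul_nonneg hx0.le hge) hn2.le]
    -- Step 2: the derivative is eventually ≤ -1, forcing β to become negative.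
    set R : ℝ := max r₀ (n * (c + c ^ 2 + 1)) with hR
    have hRr₀ : r₀ ≤ R := le_max_left _ _
    have hRn : n * (c + c ^ 2 + 1) ≤ R := le_max_right _ _
    have hR0 : 0 < R := lt_of_lt_of_le hr₀ hRr₀
    have hderiv_le : ∀ x : ℝ, R ≤ x → deriv β x ≤ -1 := by
      intro x hx
      have hx0 : 0 < x := lt_of_lt_of_le hR0 hx
      have hβc : β x ≤ c := step1 x (le_trans hRr₀ hx)
      have hβ0 : 0 ≤ β x := hnonneg x hx0.le
      have e2 := hric' x hx0
      have hxn : n * (c + c ^ 2 + 1) ≤ x := le_trans hRn hx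
      by_contra hgt
      push_neg at hgt
      have hd1 : 0 < deriv β x + 1 := by linarith
      have p1 : 0 < (deriv β x + 1) * (x * n ^ 2) := mul_pos hd1 (mul_pos hx0 hn2)
      have A : n * (-(x ^ 2) + (β x + β x ^ 2) * n ^ 2) > -(x * n ^ 2) := by nlinarith [p1, e2]
      have B : β x + β x ^ 2 ≤ c + c ^ 2 := by
        nlinarith [mul_nonneg hβ0 (sub_nonneg.mpr hβc), mul_nonneg hc0 (sub_nonneg.mpr hβc)]
      have D : 0 < n * (-(x ^ 2) + n ^ 2 * (c + c ^ 2) + x * n) := by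
        nlinarith [A, mul_le_mul_of_nonneg_left B (by positivity : (0:ℝ) ≤ n ^ 3)]
      have E : 0 < -(x ^ 2) + n ^ 2 * (c + c ^ 2) + x * n := by
        by_contra hE
        push_neg at hE
        nlinarith [mul_nonneg hn.le (neg_nonneg.mpr hE)]
      have hcc : (0:ℝ) ≤ c + c ^ 2 := by positivity
      have hnx : n ≤ x := le_trans (by linarith [mul_nonneg hn.le hcc]) hxn
      have q1 : 0 ≤ (x - n * (c + c ^ 2 + 1)) * (x - n) :=
        mul_nonneg (by linarith) (by linarith)
      have q2 : 0 ≤ (n * (c + c ^ 2 + 1)) * (x - n - n * (c + c ^ 2)) :=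
        mul_nonneg (by positivity) (by linarith [hxn])
      nlinarith [E, q1, q2, mul_nonneg (mul_nonneg hn2.le hcc) hcc]
    set M : ℝ := β R with hM
    have hM0 : 0 ≤ M := hnonneg R hR0.le
    set b : ℝ := R + M + 1 with hb
    have hRb : R ≤ b := by linarith
    have main := image_le_of_deriv_right_le_deriv_boundary
      (f := β) (f' := deriv β) (a := R) (b := b)
      (B := fun x => (M + R) - x) (B' := fun _ => -1)
      (hcont.mono (fun x hx => le_trans hR0.le hx.1))
      (fun x hx => ((hdiff x (lt_of_lt_of_le hR0 hx.1)).hasDerivAt).hasDerivWithinAt)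
      (by simp [hM])
      ((continuous_const.sub continuous_id).continuousOn)
      (fun x _ => ((hasDerivAt_id x).const_sub (M + R)).hasDerivWithinAt)
      (fun x hx => hderiv_le x hx.1)
    have hβb := main ⟨hRb, le_refl b⟩
    have hb0 : 0 ≤ β b := hnonneg b (by linarith)
    simp only [hb] at hβb
    linarith
  intro r hr
  have hk := key r hr
  have hb0 : 0 ≤ β r := hnonneg r hr.le
  constructor
  · have hsq : 1 / 4 + r ^ 2 / n ^ 2 ≤ (β r + 1 / 2) ^ 2 := by nlinarith
    have hle := Real.sqrt_le_sqrt hsq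
    rw [Real.sqrt_sq (by linarith)] at hle
    linarith
  · have e2 := hric' r hr
    have hk2 : r ^ 2 ≤ (β r + β r ^ 2) * n ^ 2 := by
      nlinarith [(div_le_iff₀ hn2).mp hk]
    by_contra hlt
    push_neg at hlt
    nlinarith [mul_pos (mul_pos hr (neg_pos.mpr hlt)) hn2, mul_nonneg hn.le (sub_nonneg.mpr hk2)]
end

section
/- Let n ≥ 1 be an integer, let p, q be nonnegative integers, and let ω0 : [0,∞) → ℝ be measurable with ∫_0^∞ s^{p−q+n−1} |ω0(s)| ds < ∞; set z0(s) = s^{n−1} ω0(s). For 0 < a < b, let P_{a,b} denote the set of continuous functions ρ : [0,∞) → ℝ with a < ρ(r) < b for all r ≥ 0, equipped with the supremum metric, and for ρ ∈ P_{a,b} write γ(r) = ∫_0^r ρ(s) ds. Define V¹_{p,q}(ρ)(r) = γ(r)^{−q} ∫_0^r γ(s)^p z0(s)/ρ(s) ds and V²_{p,q}(ρ)(r) = γ(r)^p ∫_r^∞ γ(s)^{−q} z0(s)/ρ(s) ds for r > 0. Then: (i) there exists M = M(a,b,p,q,n,ω0) such that |V¹_{p,q}(ρ)(r)| ≤ M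 and |V²_{p,q}(ρ)(r)| ≤ M for all ρ ∈ P_{a,b} and r > 0; and (ii) there exists L = L(a,b,p,q,n,ω0) such that for all ρ, ζ ∈ P_{a,b}, sup_{r>0} |V¹_{p,q}(ρ)(r) − V¹_{p,q}(ζ)(r)| ≤ L · sup_{r≥0} |ρ(r) − ζ(r)| and sup_{r>0} |V²_{p,q}(ρ)(r) − V²_{p,q}(ζ)(r)| ≤ L · sup_{r≥0} |ρ(r) − ζ(r)|. -/
open MeasureTheory Set

/-- The Lagrangian radial flow map associated to a density `ρ`: `γ(r) = ∫₀^r ρ`. -/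
noncomputable def gammaOf (ρ : ℝ → ℝ) (r : ℝ) : ℝ := ∫ s in Set.Ioc (0:ℝ) r, ρ s

/-- The first building block `V¹_{p,q}(ρ)(r) = γ(r)^{−q}∫₀^r γ(s)^p z₀(s)/ρ(s) ds`. -/
noncomputable def Vone (p q : ℕ) (z0 ρ : ℝ → ℝ) (r : ℝ) : ℝ :=
  gammaOf ρ r ^ (-(q:ℤ)) * ∫ s in Set.Ioc (0:ℝ) r, gammaOf ρ s ^ p * z0 s / ρ s

/-- The second building block `V²_{p,q}(ρ)(r) = γ(r)^p ∫_r^∞ γ(s)^{−q} z₀(s)/ρ(s) ds`. -/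
noncomputable def Vtwo (p q : ℕ) (z0 ρ : ℝ → ℝ) (r : ℝ) : ℝ :=
  gammaOf ρ r ^ p * ∫ s in Set.Ioi r, gammaOf ρ s ^ (-(q:ℤ)) * z0 s / ρ s

lemma pow_abs_diff_le (k : ℕ) {x y c : ℝ} (hx : 0 ≤ x) (hy : 0 ≤ y) (hxc : x ≤ c)
    (hyc : y ≤ c) : |x ^ k - y ^ k| ≤ k * c ^ (k - 1) * |x - y| := by
  induction k with
  | zero => simp
  | succ k ih =>
    have hc : 0 ≤ c := hx.trans hxc
    have key : x ^ (k+1) - y ^ (k+1) = x * (x ^ k - y ^ k) + (x - y) * y ^ k := by ring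
    have h1 : |x * (x ^ k - y ^ k)| ≤ c * (k * c ^ (k-1) * |x - y|) := by
      rw [abs_mul, abs_of_nonneg hx]
      exact mul_le_mul hxc ih (abs_nonneg _) hc
    have h2 : |(x - y) * y ^ k| ≤ |x - y| * c ^ k := by
      rw [abs_mul, abs_of_nonneg (pow_nonneg hy k)]
      exact mul_le_mul_of_nonneg_left (pow_le_pow_left₀ hy hyc k) (abs_nonneg _)
    have h3 : c * (k * c ^ (k-1) * |x - y|) ≤ k * c ^ k * |x - y| := by
      rcases Nat.eq_zero_or_pos k with hk | hk
      · simp [hk]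
      · have h4 : c * c ^ (k - 1) = c ^ k := by
          rw [← pow_succ', Nat.sub_add_cancel hk]
        refine le_of_eq ?_
        calc c * (↑k * c ^ (k-1) * |x - y|) = ↑k * (c * c ^ (k-1)) * |x - y| := by ring
          _ = ↑k * c ^ k * |x - y| := by rw [h4]
    calc |x ^ (k+1) - y ^ (k+1)| ≤ |x * (x ^ k - y ^ k)| + |(x - y) * y ^ k| := by
          rw [key]; exact abs_add_le _ _
      _ ≤ ↑k * c ^ k * |x - y| + |x - y| * c ^ k := add_le_add (h1.trans h3) h2
      _ = ↑(k+1) * c ^ (k+1-1) * |x - y| := by push_cast; ring_nf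

lemma zpow_neg_abs_diff_le (k : ℕ) {x y m c : ℝ} (hm : 0 < m) (hmx : m ≤ x) (hmy : m ≤ y)
    (hxc : x ≤ c) (hyc : y ≤ c) :
    |x ^ (-(k:ℤ)) - y ^ (-(k:ℤ))| ≤ ↑k * c ^ (k-1) * (m ^ k * m ^ k)⁻¹ * |x - y| := by
  have hx : 0 < x := hm.trans_le hmx
  have hy : 0 < y := hm.trans_le hmy
  rw [zpow_neg, zpow_neg, zpow_natCast, zpow_natCast,
    inv_sub_inv (pow_pos hx k).ne' (pow_pos hy k).ne', abs_div]
  have h1 : |y ^ k - x ^ k| ≤ ↑k * c ^ (k-1) * |x - y| := by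
    rw [abs_sub_comm]
    exact pow_abs_diff_le k hx.le hy.le hxc hyc
  have h2 : (m ^ k * m ^ k) ≤ |x ^ k * y ^ k| := by
    rw [abs_of_nonneg (by positivity)]
    exact mul_le_mul (pow_le_pow_left₀ hm.le hmx k) (pow_le_pow_left₀ hm.le hmy k)
      (by positivity) (by positivity)
  calc |y ^ k - x ^ k| / |x ^ k * y ^ k| ≤ (↑k * c ^ (k-1) * |x - y|) / (m ^ k * m ^ k) := by
        have hc : 0 < c := hx.trans_le hxc
        exact div_le_div₀ (mul_nonneg (mul_nonneg (Nat.cast_nonneg _)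
          (pow_nonneg hc.le _)) (abs_nonneg _)) h1 (by positivity) h2
    _ = ↑k * c ^ (k-1) * (m ^ k * m ^ k)⁻¹ * |x - y| := by ring

lemma prod3_diff {A1 A2 X1 X2 W1 W2 al al' xi xi' om om' : ℝ}
    (hA1 : |A1| ≤ al) (hA2 : |A2| ≤ al) (hX1 : |X1| ≤ xi) (hX2 : |X2| ≤ xi)
    (hW1 : |W1| ≤ om) (hW2 : |W2| ≤ om)
    (hdA : |A1 - A2| ≤ al') (hdX : |X1 - X2| ≤ xi') (hdW : |W1 - W2| ≤ om') :
    |A1 * X1 * W1 - A2 * X2 * W2| ≤ al' * xi * om + al * xi' * om + al * xi * om' := by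
  have hal : 0 ≤ al := (abs_nonneg _).trans hA1
  have hxi : 0 ≤ xi := (abs_nonneg _).trans hX1
  have hom : 0 ≤ om := (abs_nonneg _).trans hW1
  have hal' : 0 ≤ al' := (abs_nonneg _).trans hdA
  have hxi' : 0 ≤ xi' := (abs_nonneg _).trans hdX
  have key : A1 * X1 * W1 - A2 * X2 * W2
      = (A1 - A2) * X1 * W1 + A2 * (X1 - X2) * W1 + A2 * X2 * (W1 - W2) := by ring
  calc |A1 * X1 * W1 - A2 * X2 * W2|
      ≤ |(A1 - A2) * X1 * W1| + |A2 * (X1 - X2) * W1| + |A2 * X2 * (W1 - W2)| := by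
        rw [key]; exact (abs_add_le _ _).trans (add_le_add_left (abs_add_le _ _) _)
    _ ≤ al' * xi * om + al * xi' * om + al * xi * om' := by
        rw [abs_mul, abs_mul, abs_mul, abs_mul, abs_mul, abs_mul]
        refine add_le_add (add_le_add ?_ ?_) ?_
        · exact mul_le_mul (mul_le_mul hdA hX1 (abs_nonneg _) hal') hW1 (abs_nonneg _)
            (mul_nonneg hal' hxi)
        · exact mul_le_mul (mul_le_mul hA2 hdX (abs_nonneg _) hal) hW1 (abs_nonneg _)
            (mul_nonneg hal hxi')
        · exact mul_le_mul (mul_le_mul hA2 hX2 (abs_nonneg _) hal) hdW (abs_nonneg _)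
            (mul_nonneg hal hxi)

lemma spow_combine (p q n : ℕ) (hn : 1 ≤ n) {s : ℝ} (hs : 0 < s) :
    (s ^ q)⁻¹ * s ^ p * s ^ (n-1) = s ^ ((p:ℤ) - (q:ℤ) + (n:ℤ) - 1) := by
  rw [← zpow_natCast s p, ← zpow_natCast s (n-1), ← zpow_natCast s q, ← zpow_neg,
    ← zpow_add₀ hs.ne', ← zpow_add₀ hs.ne']
  congr 1
  have : ((n - 1 : ℕ) : ℤ) = (n : ℤ) - 1 := by
    omega
  rw [this]; ring

lemma integrableOn_Ioc_of_contOn {ρ : ℝ → ℝ} (hc : ContinuousOn ρ (Ici 0)) (r : ℝ) :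
    IntegrableOn ρ (Ioc 0 r) := by
  rcases le_or_gt r 0 with h | h
  · rw [Ioc_eq_empty (not_lt.2 h)]; exact integrableOn_empty
  · exact ((hc.mono Icc_subset_Ici_self).integrableOn_Icc).mono_set Ioc_subset_Icc_self

lemma vol_Ioc_lt_top (r : ℝ) : volume (Ioc (0:ℝ) r) < ⊤ := by
  rw [Real.volume_Ioc]; exact ENNReal.ofReal_lt_top

lemma setIntegral_const_Ioc (c : ℝ) {r : ℝ} (hr : 0 ≤ r) :
    ∫ _ in Ioc (0:ℝ) r, c = r * c := by
  rw [setIntegral_const, measureReal_def, Real.volume_Ioc, sub_zero, ENNReal.toReal_ofReal hr, smul_eq_mul]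

lemma gamma_lb {ρ : ℝ → ℝ} {a : ℝ} (hc : ContinuousOn ρ (Ici 0))
    (hlo : ∀ s ∈ Ici (0:ℝ), a ≤ ρ s) {r : ℝ} (hr : 0 ≤ r) : a * r ≤ gammaOf ρ r := by
  have hconst : IntegrableOn (fun _ => a) (Ioc (0:ℝ) r) :=
    integrableOn_const (vol_Ioc_lt_top r).ne
  have h := setIntegral_mono_on hconst (integrableOn_Ioc_of_contOn hc r) measurableSet_Ioc
    (fun s hs => hlo s hs.1.le)
  calc a * r = ∫ _ in Ioc (0:ℝ) r, a := by rw [setIntegral_const_Ioc a hr, mul_comm]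
    _ ≤ gammaOf ρ r := h

lemma gamma_ub {ρ : ℝ → ℝ} {b : ℝ} (hc : ContinuousOn ρ (Ici 0))
    (hhi : ∀ s ∈ Ici (0:ℝ), ρ s ≤ b) {r : ℝ} (hr : 0 ≤ r) : gammaOf ρ r ≤ b * r := by
  have hconst : IntegrableOn (fun _ => b) (Ioc (0:ℝ) r) :=
    integrableOn_const (vol_Ioc_lt_top r).ne
  have h := setIntegral_mono_on (integrableOn_Ioc_of_contOn hc r) hconst measurableSet_Ioc
    (fun s hs => hhi s hs.1.le)
  calc gammaOf ρ r ≤ ∫ _ in Ioc (0:ℝ) r, b := h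
    _ = b * r := by rw [setIntegral_const_Ioc b hr, mul_comm]

lemma gamma_mono {ρ : ℝ → ℝ} (hc : ContinuousOn ρ (Ici 0))
    (hnn : ∀ s ∈ Ici (0:ℝ), 0 ≤ ρ s) : Monotone (gammaOf ρ) := by
  intro r r' h
  have hnn' : ∀ r₀, 0 ≤ gammaOf ρ r₀ := fun r₀ =>
    setIntegral_nonneg measurableSet_Ioc fun s hs => hnn s hs.1.le
  rcases le_or_gt r 0 with hr | hr
  · have : gammaOf ρ r = 0 := by
      rw [gammaOf, Ioc_eq_empty (not_lt.2 hr), setIntegral_empty]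
    rw [this]; exact hnn' r'
  · have hu : Ioc (0:ℝ) r ∪ Ioc r r' = Ioc 0 r' := Ioc_union_Ioc_eq_Ioc hr.le h
    have hint2 : IntegrableOn ρ (Ioc r r') :=
      (integrableOn_Ioc_of_contOn hc r').mono_set (Ioc_subset_Ioc hr.le le_rfl)
    have hsplit : gammaOf ρ r' = gammaOf ρ r + ∫ s in Ioc r r', ρ s := by
      rw [gammaOf, gammaOf, ← hu,
        setIntegral_union (Ioc_disjoint_Ioc_of_le le_rfl) measurableSet_Ioc
          (integrableOn_Ioc_of_contOn hc r) hint2]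
    have h2 : 0 ≤ ∫ s in Ioc r r', ρ s :=
      setIntegral_nonneg measurableSet_Ioc fun s hs => hnn s (hr.le.trans hs.1.le)
    linarith [hsplit]

lemma gamma_dist {ρ ζ : ℝ → ℝ} {D : ℝ} (hcρ : ContinuousOn ρ (Ici 0))
    (hcζ : ContinuousOn ζ (Ici 0)) (hD : ∀ s ∈ Ici (0:ℝ), |ρ s - ζ s| ≤ D)
    {r : ℝ} (hr : 0 ≤ r) : |gammaOf ρ r - gammaOf ζ r| ≤ r * D := by
  have hsub : gammaOf ρ r - gammaOf ζ r = ∫ s in Ioc (0:ℝ) r, (ρ s - ζ s) :=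
    (integral_sub (integrableOn_Ioc_of_contOn hcρ r) (integrableOn_Ioc_of_contOn hcζ r)).symm
  have hDconst : Integrable (fun _ => D) (volume.restrict (Ioc (0:ℝ) r)) :=
    integrableOn_const (vol_Ioc_lt_top r).ne
  rw [hsub, ← Real.norm_eq_abs]
  calc ‖∫ s in Ioc (0:ℝ) r, (ρ s - ζ s)‖ ≤ ∫ _ in Ioc (0:ℝ) r, D := by
        refine norm_integral_le_of_norm_le hDconst ?_
        refine (ae_restrict_iff' measurableSet_Ioc).2 (ae_of_all _ fun s hs => ?_)
        rw [Real.norm_eq_abs]; exact hD s hs.1.le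
    _ = r * D := setIntegral_const_Ioc D hr

lemma zdiff_clean (q : ℕ) {a b t s x y D : ℝ} (ha : 0 < a) (hb : 0 < b) (hs : 0 < s)
    (hts : s ≤ t) (hx : a * t ≤ x) (hy : a * t ≤ y) (hxb : x ≤ b * t) (hyb : y ≤ b * t)
    (hd : |x - y| ≤ t * D) (hD : 0 ≤ D) :
    |x ^ (-(q:ℤ)) - y ^ (-(q:ℤ))| ≤ ↑q * b ^ (q-1) * (a ^ q * a ^ q)⁻¹ * (s ^ q)⁻¹ * D := by
  have ht : 0 < t := hs.trans_le hts
  have hat : 0 < a * t := by positivity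
  rcases Nat.eq_zero_or_pos q with hq | hq
  · subst hq; simp
  calc |x ^ (-(q:ℤ)) - y ^ (-(q:ℤ))|
      ≤ ↑q * (b*t) ^ (q-1) * ((a*t) ^ q * (a*t) ^ q)⁻¹ * |x - y| :=
        zpow_neg_abs_diff_le q hat hx hy hxb hyb
    _ ≤ ↑q * (b*t) ^ (q-1) * ((a*t) ^ q * (a*t) ^ q)⁻¹ * (t * D) := by
        refine mul_le_mul_of_nonneg_left hd ?_
        have : (0:ℝ) < b * t := by positivity
        positivity
    _ = ↑q * b ^ (q-1) * (a ^ q * a ^ q)⁻¹ * (t ^ q)⁻¹ * D := by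
        obtain ⟨k, rfl⟩ : ∃ k, q = k + 1 := ⟨q - 1, (Nat.succ_pred_eq_of_pos hq).symm⟩
        simp only [Nat.add_sub_cancel, mul_pow]
        field_simp
        ring
    _ ≤ ↑q * b ^ (q-1) * (a ^ q * a ^ q)⁻¹ * (s ^ q)⁻¹ * D := by
        refine mul_le_mul_of_nonneg_right (mul_le_mul_of_nonneg_left ?_ ?_) hD
        · exact inv_anti₀ (by positivity) (pow_le_pow_left₀ hs.le hts q)
        · have := hb.le
          positivity

lemma pdiff_clean (p : ℕ) {b s y1 y2 D : ℝ} (hb : 0 < b) (hs : 0 < s) (h10 : 0 ≤ y1)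
    (h20 : 0 ≤ y2) (h1b : y1 ≤ b * s) (h2b : y2 ≤ b * s) (hd : |y1 - y2| ≤ s * D)
    (hD : 0 ≤ D) : |y1 ^ p - y2 ^ p| ≤ ↑p * b ^ (p-1) * s ^ p * D := by
  calc |y1 ^ p - y2 ^ p| ≤ ↑p * (b*s) ^ (p-1) * |y1 - y2| :=
        pow_abs_diff_le p h10 h20 h1b h2b
    _ ≤ ↑p * (b*s) ^ (p-1) * (s * D) := by
        refine mul_le_mul_of_nonneg_left hd ?_
        have : (0:ℝ) < b * s := by positivity
        positivity
    _ = ↑p * b ^ (p-1) * s ^ p * D := by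
        rcases Nat.eq_zero_or_pos p with hp | hp
        · subst hp; simp
        obtain ⟨k, rfl⟩ : ∃ k, p = k + 1 := ⟨p - 1, (Nat.succ_pred_eq_of_pos hp).symm⟩
        simp only [Nat.add_sub_cancel, mul_pow]
        ring

lemma pt_bd {a b : ℝ} (ha : 0 < a) (hb : 0 < b) (p q n : ℕ) (hn : 1 ≤ n)
    (ω0 z0 : ℝ → ℝ) (hz0 : ∀ s, z0 s = s ^ (n-1) * ω0 s)
    {X Y R s : ℝ} (hs : 0 < s) (hX : a * s ≤ X) (hY0 : 0 ≤ Y) (hYb : Y ≤ b * s)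
    (hR : a ≤ R) :
    |X ^ (-(q:ℤ)) * (Y ^ p * z0 s / R)| ≤
      (a ^ q * a)⁻¹ * b ^ p * (s ^ ((p:ℤ) - q + n - 1) * |ω0 s|) := by
  have hXpos : (0:ℝ) < X := lt_of_lt_of_le (by positivity) hX
  have hRpos : (0:ℝ) < R := ha.trans_le hR
  have habs : |z0 s| = s ^ (n-1) * |ω0 s| := by
    rw [hz0, abs_mul, abs_of_nonneg (pow_nonneg hs.le _)]
  rw [zpow_neg, zpow_natCast, abs_mul, abs_div, abs_mul,
    abs_of_nonneg (inv_nonneg.2 (pow_nonneg hXpos.le q)),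
    abs_of_nonneg (pow_nonneg hY0 p), abs_of_pos hRpos, habs]
  calc (X ^ q)⁻¹ * (Y ^ p * (s ^ (n-1) * |ω0 s|) / R)
      ≤ ((a*s) ^ q)⁻¹ * ((b*s) ^ p * (s ^ (n-1) * |ω0 s|) / a) := by
        refine mul_le_mul ?_ ?_ ?_ ?_
        · exact inv_anti₀ (by positivity) (pow_le_pow_left₀ (by positivity) hX q)
        · refine div_le_div₀ (by positivity) ?_ ha hR
          exact mul_le_mul_of_nonneg_right (pow_le_pow_left₀ hY0 hYb p)
            (by positivity)
        · positivity
        · positivity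
    _ = (a ^ q * a)⁻¹ * b ^ p * (s ^ ((p:ℤ) - q + n - 1) * |ω0 s|) := by
        rw [← spow_combine p q n hn hs, mul_pow, mul_pow]
        field_simp

lemma wdiff_clean {a D z r1 r2 w : ℝ} (ha : 0 < a) (hr1 : a ≤ r1) (hr2 : a ≤ r2)
    (hd : |r1 - r2| ≤ D) (hzabs : |z| = w) :
    |z / r1 - z / r2| ≤ w * D / (a * a) := by
  have h1 : (0:ℝ) < r1 := ha.trans_le hr1
  have h2 : (0:ℝ) < r2 := ha.trans_le hr2
  have key : z / r1 - z / r2 = z * (r2 - r1) / (r1 * r2) := by field_simp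
  rw [key, abs_div, abs_mul, hzabs, abs_of_pos (by positivity : (0:ℝ) < r1 * r2)]
  have hw : 0 ≤ w := hzabs ▸ abs_nonneg z
  have hD0 : 0 ≤ D := (abs_nonneg _).trans hd
  refine div_le_div₀ (mul_nonneg hw hD0) ?_ (by positivity) ?_
  · exact mul_le_mul_of_nonneg_left (abs_sub_comm r1 r2 ▸ hd) hw
  · exact mul_le_mul hr1 hr2 ha.le h1.le

lemma pt_lip {a b : ℝ} (ha : 0 < a) (hb : 0 < b) (p q n : ℕ) (hn : 1 ≤ n)
    (ω0 z0 : ℝ → ℝ) (hz0 : ∀ s, z0 s = s ^ (n-1) * ω0 s)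
    {s D X1 X2 Y1 Y2 R1 R2 t : ℝ} (hs : 0 < s) (hD : 0 ≤ D) (hts : s ≤ t)
    (hX1 : a * t ≤ X1) (hX2 : a * t ≤ X2) (hX1b : X1 ≤ b * t) (hX2b : X2 ≤ b * t)
    (hdX : |X1 - X2| ≤ t * D)
    (hY10 : 0 ≤ Y1) (hY20 : 0 ≤ Y2) (hY1b : Y1 ≤ b * s) (hY2b : Y2 ≤ b * s)
    (hdY : |Y1 - Y2| ≤ s * D)
    (hR1 : a ≤ R1) (hR2 : a ≤ R2) (hdR : |R1 - R2| ≤ D) :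
    |X1 ^ (-(q:ℤ)) * (Y1 ^ p * z0 s / R1) - X2 ^ (-(q:ℤ)) * (Y2 ^ p * z0 s / R2)| ≤
      (↑q * b ^ (q-1) * (a ^ q * a ^ q)⁻¹ * b ^ p * a⁻¹
        + (a ^ q)⁻¹ * (↑p * b ^ (p-1)) * a⁻¹
        + (a ^ q)⁻¹ * b ^ p * (a * a)⁻¹) * D * (s ^ ((p:ℤ) - q + n - 1) * |ω0 s|) := by
  have ht : (0:ℝ) < t := hs.trans_le hts
  have hX1p : (0:ℝ) < X1 := lt_of_lt_of_le (mul_pos ha ht) hX1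
  have hX2p : (0:ℝ) < X2 := lt_of_lt_of_le (mul_pos ha ht) hX2
  have hR1p : (0:ℝ) < R1 := ha.trans_le hR1
  have hR2p : (0:ℝ) < R2 := ha.trans_le hR2
  have habs : |z0 s| = s ^ (n-1) * |ω0 s| := by
    rw [hz0, abs_mul, abs_of_nonneg (pow_nonneg hs.le _)]
  have hshape1 : X1 ^ (-(q:ℤ)) * (Y1 ^ p * z0 s / R1)
      = X1 ^ (-(q:ℤ)) * Y1 ^ p * (z0 s / R1) := by ring
  have hshape2 : X2 ^ (-(q:ℤ)) * (Y2 ^ p * z0 s / R2)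
      = X2 ^ (-(q:ℤ)) * Y2 ^ p * (z0 s / R2) := by ring
  rw [hshape1, hshape2]
  have hAbd : ∀ X : ℝ, (0:ℝ) < X → a * s ≤ X → |X ^ (-(q:ℤ))| ≤ ((a*s) ^ q)⁻¹ := by
    intro X hXp hXlb
    rw [zpow_neg, zpow_natCast, abs_of_nonneg (inv_nonneg.2 (pow_nonneg hXp.le q))]
    exact inv_anti₀ (by positivity) (pow_le_pow_left₀ (by positivity) hXlb q)
  have hXs1 : a * s ≤ X1 := le_trans (by nlinarith) hX1
  have hXs2 : a * s ≤ X2 := le_trans (by nlinarith) hX2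
  have hWbd : ∀ R : ℝ, a ≤ R → |z0 s / R| ≤ s ^ (n-1) * |ω0 s| / a := by
    intro R hR
    rw [abs_div, habs, abs_of_pos (ha.trans_le hR)]
    exact div_le_div₀ (by positivity) le_rfl ha hR
  have hYbd : ∀ Y : ℝ, 0 ≤ Y → Y ≤ b * s → |Y ^ p| ≤ (b*s) ^ p := by
    intro Y h0 hYb
    rw [abs_of_nonneg (pow_nonneg h0 p)]
    exact pow_le_pow_left₀ h0 hYb p
  have hdA : |X1 ^ (-(q:ℤ)) - X2 ^ (-(q:ℤ))|
      ≤ ↑q * b ^ (q-1) * (a ^ q * a ^ q)⁻¹ * (s ^ q)⁻¹ * D :=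
    zdiff_clean q ha hb hs hts hX1 hX2 hX1b hX2b hdX hD
  have hdY' : |Y1 ^ p - Y2 ^ p| ≤ ↑p * b ^ (p-1) * s ^ p * D :=
    pdiff_clean p hb hs hY10 hY20 hY1b hY2b hdY hD
  have hdW : |z0 s / R1 - z0 s / R2| ≤ (s ^ (n-1) * |ω0 s|) * D / (a * a) :=
    wdiff_clean ha hR1 hR2 hdR habs
  have main := prod3_diff (hAbd X1 hX1p hXs1) (hAbd X2 hX2p hXs2)
    (hYbd Y1 hY10 hY1b) (hYbd Y2 hY20 hY2b) (hWbd R1 hR1) (hWbd R2 hR2) hdA hdY' hdW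
  refine main.trans (le_of_eq ?_)
  rw [← spow_combine p q n hn hs, mul_pow]
  field_simp
  ring

lemma f_dom {a b : ℝ} (ha : 0 < a) (hb : 0 < b) (p q n : ℕ) (hn : 1 ≤ n)
    (ω0 z0 : ℝ → ℝ) (hz0 : ∀ s, z0 s = s ^ (n-1) * ω0 s)
    {Y R s r : ℝ} (hs : 0 < s) (hsr : s ≤ r) (hY0 : 0 ≤ Y) (hYb : Y ≤ b * s)
    (hR : a ≤ R) :
    |Y ^ p * z0 s / R| ≤ b ^ p * r ^ q * a⁻¹ * (s ^ ((p:ℤ) - q + n - 1) * |ω0 s|) := by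
  have hRp : (0:ℝ) < R := ha.trans_le hR
  have habs : |z0 s| = s ^ (n-1) * |ω0 s| := by
    rw [hz0, abs_mul, abs_of_nonneg (pow_nonneg hs.le _)]
  rw [abs_div, abs_mul, abs_of_nonneg (pow_nonneg hY0 p), abs_of_pos hRp, habs]
  calc Y ^ p * (s ^ (n-1) * |ω0 s|) / R ≤ (b*s) ^ p * (s ^ (n-1) * |ω0 s|) / a := by
        refine div_le_div₀ (by positivity) ?_ ha hR
        exact mul_le_mul_of_nonneg_right (pow_le_pow_left₀ hY0 hYb p) (by positivity)
    _ = b ^ p * s ^ q * a⁻¹ * (s ^ ((p:ℤ) - q + n - 1) * |ω0 s|) := by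
        rw [← spow_combine p q n hn hs, mul_pow]
        field_simp
    _ ≤ b ^ p * r ^ q * a⁻¹ * (s ^ ((p:ℤ) - q + n - 1) * |ω0 s|) := by
        have h1 : s ^ q ≤ r ^ q := pow_le_pow_left₀ hs.le hsr q
        have h2 : (0:ℝ) ≤ s ^ ((p:ℤ) - q + n - 1) * |ω0 s| := by
          exact mul_nonneg (zpow_nonneg hs.le _) (abs_nonneg _)
        have h3 : (0:ℝ) ≤ b ^ p := by positivity
        nlinarith [mul_le_mul_of_nonneg_right (mul_le_mul_of_nonneg_left h1 h3)
          (mul_nonneg (inv_nonneg.2 ha.le) h2)]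

lemma g_dom {a b : ℝ} (ha : 0 < a) (hb : 0 < b) (p q n : ℕ) (hn : 1 ≤ n)
    (ω0 z0 : ℝ → ℝ) (hz0 : ∀ s, z0 s = s ^ (n-1) * ω0 s)
    {X R s r : ℝ} (hr : 0 < r) (hrs : r ≤ s) (hX : a * s ≤ X) (hR : a ≤ R) :
    |X ^ (-(q:ℤ)) * z0 s / R| ≤
      (a ^ q * a)⁻¹ * (r ^ p)⁻¹ * (s ^ ((p:ℤ) - q + n - 1) * |ω0 s|) := by
  have hs : (0:ℝ) < s := hr.trans_le hrs
  have hXp : (0:ℝ) < X := lt_of_lt_of_le (by positivity) hX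
  have hRp : (0:ℝ) < R := ha.trans_le hR
  have habs : |z0 s| = s ^ (n-1) * |ω0 s| := by
    rw [hz0, abs_mul, abs_of_nonneg (pow_nonneg hs.le _)]
  rw [zpow_neg, zpow_natCast, abs_div, abs_mul,
    abs_of_nonneg (inv_nonneg.2 (pow_nonneg hXp.le q)), abs_of_pos hRp, habs]
  calc (X ^ q)⁻¹ * (s ^ (n-1) * |ω0 s|) / R
      ≤ ((a*s) ^ q)⁻¹ * (s ^ (n-1) * |ω0 s|) / a := by
        refine div_le_div₀ (by positivity) ?_ ha hR
        refine mul_le_mul_of_nonneg_right ?_ (by positivity)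
        exact inv_anti₀ (by positivity) (pow_le_pow_left₀ (by positivity) hX q)
    _ = (a ^ q * a)⁻¹ * (s ^ p)⁻¹ * (s ^ ((p:ℤ) - q + n - 1) * |ω0 s|) := by
        rw [← spow_combine p q n hn hs, mul_pow]
        field_simp
    _ ≤ (a ^ q * a)⁻¹ * (r ^ p)⁻¹ * (s ^ ((p:ℤ) - q + n - 1) * |ω0 s|) := by
        have h1 : (s ^ p)⁻¹ ≤ (r ^ p)⁻¹ :=
          inv_anti₀ (by positivity) (pow_le_pow_left₀ hr.le hrs p)
        have h2 : (0:ℝ) ≤ s ^ ((p:ℤ) - q + n - 1) * |ω0 s| :=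
          mul_nonneg (zpow_nonneg hs.le _) (abs_nonneg _)
        have h3 : (0:ℝ) ≤ (a ^ q * a)⁻¹ := by positivity
        exact mul_le_mul_of_nonneg_right (mul_le_mul_of_nonneg_left h1 h3) h2

lemma z0_measurable (n : ℕ) (ω0 z0 : ℝ → ℝ) (hmeas : Measurable ω0)
    (hz0 : ∀ s, z0 s = s ^ (n-1) * ω0 s) : Measurable z0 := by
  have : z0 = fun s => s ^ (n-1) * ω0 s := funext hz0
  rw [this]
  exact (measurable_id.pow_const (n-1)).mul hmeas

lemma f_integrable {a b : ℝ} (ha : 0 < a) (hb : 0 < b) (p q n : ℕ) (hn : 1 ≤ n)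
    (ω0 : ℝ → ℝ) (hmeas : Measurable ω0)
    (hint : IntegrableOn (fun s => s ^ ((p:ℤ) - (q:ℤ) + (n:ℤ) - 1) * |ω0 s|) (Ioi 0))
    (z0 : ℝ → ℝ) (hz0 : ∀ s, z0 s = s ^ (n-1) * ω0 s)
    {ρ : ℝ → ℝ} (hc : ContinuousOn ρ (Ici 0))
    (hlo : ∀ s ∈ Ici (0:ℝ), a ≤ ρ s) (hhi : ∀ s ∈ Ici (0:ℝ), ρ s ≤ b)
    {r : ℝ} (hr : 0 < r) :
    IntegrableOn (fun s => gammaOf ρ s ^ p * z0 s / ρ s) (Ioc 0 r) := by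
  have hnn : ∀ s ∈ Ici (0:ℝ), 0 ≤ ρ s := fun s hs => ha.le.trans (hlo s hs)
  have hγm : Measurable (gammaOf ρ) := (gamma_mono hc hnn).measurable
  have hz0m : Measurable z0 := z0_measurable n ω0 z0 hmeas hz0
  have hsub : Ioc (0:ℝ) r ⊆ Ici 0 := fun x hx => hx.1.le
  have hρae : AEMeasurable ρ (volume.restrict (Ioc (0:ℝ) r)) :=
    (hc.mono hsub).aemeasurable measurableSet_Ioc
  have hfm : AEStronglyMeasurable (fun s => gammaOf ρ s ^ p * z0 s / ρ s)
      (volume.restrict (Ioc (0:ℝ) r)) :=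
    (((hγm.pow_const p).mul hz0m).aemeasurable.div hρae).aestronglyMeasurable
  refine Integrable.mono'
    (IntegrableOn.mono_set (hint.const_mul (b ^ p * r ^ q * a⁻¹)) Ioc_subset_Ioi_self) hfm ?_
  refine (ae_restrict_iff' measurableSet_Ioc).2 (ae_of_all _ fun s hs => ?_)
  rw [Real.norm_eq_abs]
  exact f_dom ha hb p q n hn ω0 z0 hz0 hs.1 hs.2
    ((mul_nonneg ha.le hs.1.le).trans (gamma_lb hc hlo hs.1.le))
    (gamma_ub hc hhi hs.1.le) (hlo s hs.1.le)

lemma g_integrable {a b : ℝ} (ha : 0 < a) (hb : 0 < b) (p q n : ℕ) (hn : 1 ≤ n)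
    (ω0 : ℝ → ℝ) (hmeas : Measurable ω0)
    (hint : IntegrableOn (fun s => s ^ ((p:ℤ) - (q:ℤ) + (n:ℤ) - 1) * |ω0 s|) (Ioi 0))
    (z0 : ℝ → ℝ) (hz0 : ∀ s, z0 s = s ^ (n-1) * ω0 s)
    {ρ : ℝ → ℝ} (hc : ContinuousOn ρ (Ici 0))
    (hlo : ∀ s ∈ Ici (0:ℝ), a ≤ ρ s) (hhi : ∀ s ∈ Ici (0:ℝ), ρ s ≤ b)
    {r : ℝ} (hr : 0 < r) :
    IntegrableOn (fun s => gammaOf ρ s ^ (-(q:ℤ)) * z0 s / ρ s) (Ioi r) := by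
  have hnn : ∀ s ∈ Ici (0:ℝ), 0 ≤ ρ s := fun s hs => ha.le.trans (hlo s hs)
  have hγm : Measurable (gammaOf ρ) := (gamma_mono hc hnn).measurable
  have hz0m : Measurable z0 := z0_measurable n ω0 z0 hmeas hz0
  have hsub : Ioi r ⊆ Ici (0:ℝ) := fun x hx => (hr.trans hx).le
  have hρae : AEMeasurable ρ (volume.restrict (Ioi r)) :=
    (hc.mono hsub).aemeasurable measurableSet_Ioi
  have hfun : (fun s => gammaOf ρ s ^ (-(q:ℤ)) * z0 s / ρ s)
      = fun s => (gammaOf ρ s ^ q)⁻¹ * z0 s / ρ s := by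
    funext s; rw [zpow_neg, zpow_natCast]
  have hfm : AEStronglyMeasurable (fun s => gammaOf ρ s ^ (-(q:ℤ)) * z0 s / ρ s)
      (volume.restrict (Ioi r)) := by
    rw [hfun]
    exact ((((hγm.pow_const q).inv).mul hz0m).aemeasurable.div hρae).aestronglyMeasurable
  refine Integrable.mono'
    (IntegrableOn.mono_set (hint.const_mul ((a ^ q * a)⁻¹ * (r ^ p)⁻¹)) (Ioi_subset_Ioi hr.le)) hfm ?_
  refine (ae_restrict_iff' measurableSet_Ioi).2 (ae_of_all _ fun s hs => ?_)
  rw [Real.norm_eq_abs]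
  have hs0 : (0:ℝ) ≤ s := (hr.trans hs).le
  exact g_dom ha hb p q n hn ω0 z0 hz0 hr hs.le (gamma_lb hc hlo hs0) (hlo s hs0)

/-- boundedness and Lipschitz continuity, in the supremum norm on the set
`P_{a,b}` of continuous densities with `a < ρ < b`, of the building blocks of the
Lagrangian form of the radial homogeneous EPDiff equations. -/
theorem Vfields_bounded_lipschitz (n p q : ℕ) (hn : 1 ≤ n)
    (ω0 : ℝ → ℝ) (hmeas : Measurable ω0)
    (hint : IntegrableOn (fun s => s ^ ((p:ℤ) - (q:ℤ) + (n:ℤ) - 1) * |ω0 s|) (Ioi 0))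
    (z0 : ℝ → ℝ) (hz0 : ∀ s : ℝ, z0 s = s ^ (n - 1) * ω0 s)
    (a b : ℝ) (ha : 0 < a) (hab : a < b) :
    (∃ M : ℝ, ∀ ρ : ℝ → ℝ,
      ContinuousOn ρ (Ici 0) → (∀ r : ℝ, 0 ≤ r → a < ρ r ∧ ρ r < b) →
      ∀ r : ℝ, 0 < r → |Vone p q z0 ρ r| ≤ M ∧ |Vtwo p q z0 ρ r| ≤ M) ∧
    ∃ L : ℝ, ∀ ρ ζ : ℝ → ℝ,
      ContinuousOn ρ (Ici 0) → (∀ r : ℝ, 0 ≤ r → a < ρ r ∧ ρ r < b) →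
      ContinuousOn ζ (Ici 0) → (∀ r : ℝ, 0 ≤ r → a < ζ r ∧ ζ r < b) →
      ∀ r : ℝ, 0 < r →
        (|Vone p q z0 ρ r - Vone p q z0 ζ r| ≤
          L * ⨆ x : {x : ℝ // 0 ≤ x}, |ρ x.1 - ζ x.1|) ∧
        |Vtwo p q z0 ρ r - Vtwo p q z0 ζ r| ≤
          L * ⨆ x : {x : ℝ // 0 ≤ x}, |ρ x.1 - ζ x.1| := by
  have hb : 0 < b := ha.trans hab
  constructor
  · refine ⟨∫ s in Ioi (0:ℝ), (a ^ q * a)⁻¹ * b ^ p *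
      (s ^ ((p:ℤ) - (q:ℤ) + (n:ℤ) - 1) * |ω0 s|), ?_⟩
    intro ρ hc hbnd r hr
    have hlo : ∀ s ∈ Ici (0:ℝ), a ≤ ρ s := fun s hs => (hbnd s hs).1.le
    have hhi : ∀ s ∈ Ici (0:ℝ), ρ s ≤ b := fun s hs => (hbnd s hs).2.le
    have hdom : IntegrableOn (fun s => (a ^ q * a)⁻¹ * b ^ p *
        (s ^ ((p:ℤ) - (q:ℤ) + (n:ℤ) - 1) * |ω0 s|)) (Ioi (0:ℝ)) :=
      hint.const_mul ((a ^ q * a)⁻¹ * b ^ p)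
    have hBnn : (0:ℝ → ℝ) ≤ᵐ[volume.restrict (Ioi (0:ℝ))] fun s => (a ^ q * a)⁻¹ * b ^ p *
        (s ^ ((p:ℤ) - (q:ℤ) + (n:ℤ) - 1) * |ω0 s|) := by
      refine (ae_restrict_iff' measurableSet_Ioi).2 (ae_of_all _ fun s hs => ?_)
      exact mul_nonneg (by positivity) (mul_nonneg (zpow_nonneg (le_of_lt hs) _) (abs_nonneg _))
    constructor
    · rw [Vone, ← integral_const_mul, ← Real.norm_eq_abs]
      refine le_trans (norm_integral_le_of_norm_le (IntegrableOn.mono_set hdom Ioc_subset_Ioi_self) ?_)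
        (setIntegral_mono_set hdom hBnn (HasSubset.Subset.eventuallyLE Ioc_subset_Ioi_self))
      refine (ae_restrict_iff' measurableSet_Ioc).2 (ae_of_all _ fun s hs => ?_)
      rw [Real.norm_eq_abs]
      refine pt_bd ha hb p q n hn ω0 z0 hz0 hs.1 ?_ ?_ ?_ (hlo s hs.1.le)
      · exact le_trans (by nlinarith [hs.2, ha.le]) (gamma_lb hc hlo hr.le)
      · exact (mul_nonneg ha.le hs.1.le).trans (gamma_lb hc hlo hs.1.le)
      · exact gamma_ub hc hhi hs.1.le
    · rw [Vtwo, ← integral_const_mul, ← Real.norm_eq_abs]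
      refine le_trans (norm_integral_le_of_norm_le (IntegrableOn.mono_set hdom (Ioi_subset_Ioi hr.le)) ?_)
        (setIntegral_mono_set hdom hBnn (HasSubset.Subset.eventuallyLE (Ioi_subset_Ioi hr.le)))
      refine (ae_restrict_iff' measurableSet_Ioi).2 (ae_of_all _ fun s hs => ?_)
      have hs0 : (0:ℝ) < s := hr.trans hs
      have hsh : gammaOf ρ r ^ p * (gammaOf ρ s ^ (-(q:ℤ)) * z0 s / ρ s)
          = gammaOf ρ s ^ (-(q:ℤ)) * (gammaOf ρ r ^ p * z0 s / ρ s) := by ring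
      rw [Real.norm_eq_abs, hsh]
      refine pt_bd ha hb p q n hn ω0 z0 hz0 hs0 (gamma_lb hc hlo hs0.le) ?_ ?_ (hlo s hs0.le)
      · exact (mul_nonneg ha.le hr.le).trans (gamma_lb hc hlo hr.le)
      · exact le_trans (gamma_ub hc hhi hr.le) (by nlinarith [(mem_Ioi.1 hs).le, hb.le])
  · refine ⟨(↑q * b ^ (q-1) * (a ^ q * a ^ q)⁻¹ * b ^ p * a⁻¹
        + (a ^ q)⁻¹ * (↑p * b ^ (p-1)) * a⁻¹
        + (a ^ q)⁻¹ * b ^ p * (a * a)⁻¹) *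
      ∫ s in Ioi (0:ℝ), s ^ ((p:ℤ) - (q:ℤ) + (n:ℤ) - 1) * |ω0 s|, ?_⟩
    intro ρ ζ hcρ hbρ hcζ hbζ r hr
    set CC : ℝ := ↑q * b ^ (q-1) * (a ^ q * a ^ q)⁻¹ * b ^ p * a⁻¹
        + (a ^ q)⁻¹ * (↑p * b ^ (p-1)) * a⁻¹
        + (a ^ q)⁻¹ * b ^ p * (a * a)⁻¹ with hCCdef
    set D : ℝ := ⨆ x : {x : ℝ // 0 ≤ x}, |ρ x.1 - ζ x.1| with hDdef
    have hbdd : BddAbove (Set.range fun x : {x : ℝ // 0 ≤ x} => |ρ x.1 - ζ x.1|) := by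
      refine ⟨b - a, ?_⟩
      rintro y ⟨⟨x, hx⟩, rfl⟩
      have h1 := hbρ x hx
      have h2 := hbζ x hx
      exact (abs_sub_lt_iff.2 ⟨by linarith [h1.2, h2.1], by linarith [h1.1, h2.2]⟩).le
    have hDs : ∀ s ∈ Ici (0:ℝ), |ρ s - ζ s| ≤ D := fun s hs => le_ciSup hbdd ⟨s, hs⟩
    have hD0 : 0 ≤ D := (abs_nonneg _).trans (hDs 0 Set.self_mem_Ici)
    have hloρ : ∀ s ∈ Ici (0:ℝ), a ≤ ρ s := fun s hs => (hbρ s hs).1.le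
    have hhiρ : ∀ s ∈ Ici (0:ℝ), ρ s ≤ b := fun s hs => (hbρ s hs).2.le
    have hloζ : ∀ s ∈ Ici (0:ℝ), a ≤ ζ s := fun s hs => (hbζ s hs).1.le
    have hhiζ : ∀ s ∈ Ici (0:ℝ), ζ s ≤ b := fun s hs => (hbζ s hs).2.le
    have hdom : IntegrableOn (fun s => CC * D *
        (s ^ ((p:ℤ) - (q:ℤ) + (n:ℤ) - 1) * |ω0 s|)) (Ioi (0:ℝ)) := hint.const_mul (CC * D)
    have hBnn : (0:ℝ → ℝ) ≤ᵐ[volume.restrict (Ioi (0:ℝ))] fun s => CC * D *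
        (s ^ ((p:ℤ) - (q:ℤ) + (n:ℤ) - 1) * |ω0 s|) := by
      have hCC0 : 0 ≤ CC := by
        rw [hCCdef]
        have ha0 : (0:ℝ) ≤ a := ha.le
        have hb0 : (0:ℝ) ≤ b := hb.le
        refine add_nonneg (add_nonneg ?_ ?_) ?_ <;>
          apply_rules [mul_nonneg, inv_nonneg.2, pow_nonneg, Nat.cast_nonneg]
      refine (ae_restrict_iff' measurableSet_Ioi).2 (ae_of_all _ fun s hs => ?_)
      exact mul_nonneg (mul_nonneg hCC0 hD0)
        (mul_nonneg (zpow_nonneg (le_of_lt hs) _) (abs_nonneg _))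
    constructor
    · rw [Vone, Vone, ← integral_const_mul, ← integral_const_mul,
        ← integral_sub
          ((f_integrable ha hb p q n hn ω0 hmeas hint z0 hz0 hcρ hloρ hhiρ hr).const_mul _)
          ((f_integrable ha hb p q n hn ω0 hmeas hint z0 hz0 hcζ hloζ hhiζ hr).const_mul _),
        ← Real.norm_eq_abs]
      refine le_trans (norm_integral_le_of_norm_le (IntegrableOn.mono_set hdom Ioc_subset_Ioi_self) ?_) ?_
      · refine (ae_restrict_iff' measurableSet_Ioc).2 (ae_of_all _ fun s hs => ?_)
        rw [Real.norm_eq_abs]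
        refine pt_lip ha hb p q n hn ω0 z0 hz0 hs.1 hD0 hs.2
          (gamma_lb hcρ hloρ hr.le) (gamma_lb hcζ hloζ hr.le)
          (gamma_ub hcρ hhiρ hr.le) (gamma_ub hcζ hhiζ hr.le)
          (gamma_dist hcρ hcζ hDs hr.le)
          ((mul_nonneg ha.le hs.1.le).trans (gamma_lb hcρ hloρ hs.1.le))
          ((mul_nonneg ha.le hs.1.le).trans (gamma_lb hcζ hloζ hs.1.le))
          (gamma_ub hcρ hhiρ hs.1.le) (gamma_ub hcζ hhiζ hs.1.le)
          (gamma_dist hcρ hcζ hDs hs.1.le)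
          (hloρ s hs.1.le) (hloζ s hs.1.le) (hDs s hs.1.le)
      · refine le_trans (setIntegral_mono_set hdom hBnn
          (HasSubset.Subset.eventuallyLE Ioc_subset_Ioi_self)) (le_of_eq ?_)
        rw [integral_const_mul]
        ring
    · rw [Vtwo, Vtwo, ← integral_const_mul, ← integral_const_mul,
        ← integral_sub
          ((g_integrable ha hb p q n hn ω0 hmeas hint z0 hz0 hcρ hloρ hhiρ hr).const_mul _)
          ((g_integrable ha hb p q n hn ω0 hmeas hint z0 hz0 hcζ hloζ hhiζ hr).const_mul _),
        ← Real.norm_eq_abs]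
      refine le_trans (norm_integral_le_of_norm_le (IntegrableOn.mono_set hdom (Ioi_subset_Ioi hr.le)) ?_) ?_
      · refine (ae_restrict_iff' measurableSet_Ioi).2 (ae_of_all _ fun s hs => ?_)
        have hs0 : (0:ℝ) < s := hr.trans hs
        have e1 : gammaOf ρ r ^ p * (gammaOf ρ s ^ (-(q:ℤ)) * z0 s / ρ s)
            = gammaOf ρ s ^ (-(q:ℤ)) * (gammaOf ρ r ^ p * z0 s / ρ s) := by ring
        have e2 : gammaOf ζ r ^ p * (gammaOf ζ s ^ (-(q:ℤ)) * z0 s / ζ s)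
            = gammaOf ζ s ^ (-(q:ℤ)) * (gammaOf ζ r ^ p * z0 s / ζ s) := by ring
        rw [Real.norm_eq_abs, e1, e2]
        refine pt_lip ha hb p q n hn ω0 z0 hz0 hs0 hD0 le_rfl
          (gamma_lb hcρ hloρ hs0.le) (gamma_lb hcζ hloζ hs0.le)
          (gamma_ub hcρ hhiρ hs0.le) (gamma_ub hcζ hhiζ hs0.le)
          (gamma_dist hcρ hcζ hDs hs0.le)
          ((mul_nonneg ha.le hr.le).trans (gamma_lb hcρ hloρ hr.le))
          ((mul_nonneg ha.le hr.le).trans (gamma_lb hcζ hloζ hr.le))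
          (le_trans (gamma_ub hcρ hhiρ hr.le) (by nlinarith [(mem_Ioi.1 hs).le, hb.le]))
          (le_trans (gamma_ub hcζ hhiζ hr.le) (by nlinarith [(mem_Ioi.1 hs).le, hb.le]))
          (le_trans (gamma_dist hcρ hcζ hDs hr.le)
            (mul_le_mul_of_nonneg_right hs.le hD0))
          (hloρ s hs0.le) (hloζ s hs0.le) (hDs s hs0.le)
      · refine le_trans (setIntegral_mono_set hdom hBnn
          (HasSubset.Subset.eventuallyLE (Ioi_subset_Ioi hr.le))) (le_of_eq ?_)
        rw [integral_const_mul]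
        ring
end
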